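/- arXiv:1204.4635 — 2 statements merged into one kernel-verified Lean document; each statement's English description precedes it below -/
import Mathlib

section
/- Let V be a finite-dimensional vector space over a field F and A a nilpotent endomorphism of V. Then there exist vectors z_1,...,z_r in V such that V decomposes as a direct sum of the cyclic F[A]-submodules F[A]·z_k, and the lengths q_k = dim F[A]·z_k, arranged in decreasing order, form the Jordan type of A. -/
/-!
For an `A`-invariant subspace `W`, the image `A W` is a strictly smaller invariant subspace
(nilpotency), so by induction it has a basis of Jordan chains `w_k, A w_k, …, A^{q_k - 1} w_k`
with `A^{q_k} w_k = 0`. Lifting each `w_k` to some `z_k ∈ W` with `A z_k = w_k` lengthens every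
chain by one; completing the new chain ends `A^{q_k} z_k` to a basis of `W ∩ ker A` adds chains of
length one. The new chains span `W`, and rank–nullity for `A` on `W` shows they are as many as
`dim W`, hence a basis.

A Jordan-chain basis of `V` gives the cyclic decomposition block by block. The vectors
`A^j z_k` with `j ≥ q_k - m` lie in `ker A^m` and those with `j ≥ m` in the range of `A^m`;
since their numbers add up to `dim V`, rank–nullity forces `dim ker A^m = ∑_k min(q_k, m)`.
-/

/-- `P` is the Jordan type of the nilpotent endomorphism `A`: a weakly decreasing
list of positive integers such that for every `m`, the number of boxes in the first
`m` columns of `P` equals `dim ker A^m`. -/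
def IsJordanType (F V : Type*) [Field F] [AddCommGroup V] [Module F V]
    (A : Module.End F V) (P : List ℕ) : Prop :=
  P.Pairwise (· ≥ ·) ∧ (∀ p ∈ P, 0 < p) ∧
    ∀ m : ℕ, (P.map (fun p => min p m)).sum =
      Module.finrank F ↥(LinearMap.ker (A ^ m))

/-- The cyclic `F[A]`-submodule generated by `z`: the span of `z, A z, A² z, …`. -/
def cyclicSub (F V : Type*) [Field F] [AddCommGroup V] [Module F V]
    (A : Module.End F V) (z : V) : Submodule F V :=
  Submodule.span F (Set.range fun j : ℕ => (A ^ j) z)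

open Module Submodule

section General

variable {R M : Type*} [Semiring R] [AddCommMonoid M] [Module R M]

lemma Module.End.pow_apply_eq_zero_of_le {A : Module.End R M} {z : M} {q n : ℕ}
    (hz : (A ^ q) z = 0) (h : q ≤ n) : (A ^ n) z = 0 := by
  rw [← Nat.sub_add_cancel h, pow_add, Module.End.mul_apply, hz, map_zero]

lemma Submodule.map_lt_of_isNilpotent {A : Module.End R M} (hA : IsNilpotent A)
    {W : Submodule R M} (hW : W.map A ≤ W) (hne : W ≠ ⊥) : W.map A < W := by
  refine hW.lt_of_ne fun h => hne ?_
  have hpow : ∀ n, W.map (A ^ n) = W := by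
    intro n
    induction n with
    | zero => rw [pow_zero, Module.End.one_eq_id, map_id]
    | succ n ih => rw [pow_succ, Module.End.mul_eq_comp, map_comp, h, ih]
  obtain ⟨n, hn⟩ := hA
  rw [← hpow n, hn]
  exact Submodule.map_zero W

lemma LinearIndependent.iSupIndep_span_sigma {ι : Type*} {β : ι → Type*}
    {v : (Σ k, β k) → M} (hv : LinearIndependent R v) :
    iSupIndep fun k => span R (Set.range fun b => v ⟨k, b⟩) := by
  have hfiber : ∀ k, Set.range (fun b => v ⟨k, b⟩) = v '' {p | p.1 = k} := by
    intro k
    ext x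
    constructor
    · rintro ⟨b, rfl⟩
      exact ⟨⟨k, b⟩, rfl, rfl⟩
    · rintro ⟨⟨k', b⟩, rfl : k' = k, rfl⟩
      exact ⟨b, rfl⟩
  rw [iSupIndep_def]
  intro k
  refine (hv.disjoint_span_image (s := {p | p.1 = k}) (t := {p | p.1 ≠ k})
    (Set.disjoint_left.2 fun p hp hp' => hp' hp)).mono (by rw [hfiber]) ?_
  refine iSup₂_le fun j hj => ?_
  rw [hfiber]
  exact span_mono (Set.image_mono fun p (hp : p.1 = j) => show p.1 ≠ k from hp ▸ hj)

lemma Submodule.span_range_sigma {ι : Type*} {β : ι → Type*} (v : (Σ k, β k) → M) :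
    span R (Set.range v) = ⨆ k, span R (Set.range fun b => v ⟨k, b⟩) := by
  rw [Set.range_sigma_eq_iUnion_range, span_iUnion]

end General

section Jordan

variable {F V : Type*} [Field F] [AddCommGroup V] [Module F V] {A : Module.End F V}
  {ι : Type*} {q : ι → ℕ} {z : ι → V} {W : Submodule F V}

lemma LinearIndependent.card_le_finrank_of_forall_mem [FiniteDimensional F V] {κ : Type*}
    [Fintype κ] {v : κ → V} (hv : LinearIndependent F v) {P : Submodule F V}
    (hP : ∀ i, v i ∈ P) : Fintype.card κ ≤ finrank F P :=
  (LinearIndependent.of_comp P.subtype (v := fun i => (⟨v i, hP i⟩ : P)) hv)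
    |>.fintype_card_le_finrank

lemma Submodule.finrank_map_add_finrank_inf_ker {V' : Type*} [AddCommGroup V'] [Module F V']
    [FiniteDimensional F V] (f : V →ₗ[F] V') (W : Submodule F V) :
    finrank F (W.map f) + finrank F ↥(W ⊓ LinearMap.ker f) = finrank F W := by
  rw [← LinearMap.range_domRestrict, ← map_comap_subtype, finrank_map_subtype_eq,
    ← LinearMap.ker_domRestrict]
  exact LinearMap.finrank_range_add_finrank_ker (f.domRestrict W)

def jordanChains (A : Module.End F V) (q : ι → ℕ) (z : ι → V) : (Σ k, Fin (q k)) → V :=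
  fun p => (A ^ (p.2 : ℕ)) (z p.1)

structure IsJordanBasis (A : Module.End F V) (W : Submodule F V) (q : ι → ℕ) (z : ι → V) :
    Prop where
  pos : ∀ k, 0 < q k
  pow_apply_eq_zero : ∀ k, (A ^ q k) (z k) = 0
  linearIndependent : LinearIndependent F (jordanChains A q z)
  span_eq : span F (Set.range (jordanChains A q z)) = W

lemma isJordanBasis_empty : IsJordanBasis A ⊥ (Empty.elim : Empty → ℕ) Empty.elim where
  pos := Empty.rec
  pow_apply_eq_zero := Empty.rec
  linearIndependent := linearIndependent_empty_type
  span_eq := by rw [Set.range_eq_empty, span_empty]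

lemma cyclicSub_eq_span {x : V} {n : ℕ} (hx : (A ^ n) x = 0) :
    cyclicSub F V A x = span F (Set.range fun j : Fin n => (A ^ (j : ℕ)) x) := by
  apply le_antisymm
  · refine span_le.2 (Set.range_subset_iff.2 fun j => ?_)
    by_cases hj : j < n
    · exact subset_span ⟨⟨j, hj⟩, rfl⟩
    · rw [SetLike.mem_coe, A.pow_apply_eq_zero_of_le hx (not_lt.1 hj)]
      exact zero_mem _
  · exact span_mono (Set.range_subset_iff.2 fun j => ⟨j, rfl⟩)

namespace IsJordanBasis

lemma cyclicSub_eq (hb : IsJordanBasis A W q z) (k : ι) :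
    cyclicSub F V A (z k) = span F (Set.range fun j => jordanChains A q z ⟨k, j⟩) :=
  cyclicSub_eq_span (hb.pow_apply_eq_zero k)

lemma finrank_cyclicSub (hb : IsJordanBasis A W q z) (k : ι) :
    finrank F (cyclicSub F V A (z k)) = q k := by
  have hblock : LinearIndependent F fun j => jordanChains A q z ⟨k, j⟩ :=
    hb.linearIndependent.comp _ sigma_mk_injective
  rw [hb.cyclicSub_eq, finrank_span_eq_card hblock, Fintype.card_fin]

lemma iSupIndep_cyclicSub (hb : IsJordanBasis A W q z) :
    iSupIndep fun k => cyclicSub F V A (z k) := by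
  simp_rw [hb.cyclicSub_eq]
  exact hb.linearIndependent.iSupIndep_span_sigma

lemma iSup_cyclicSub (hb : IsJordanBasis A W q z) : ⨆ k, cyclicSub F V A (z k) = W := by
  simp_rw [hb.cyclicSub_eq]
  rw [← span_range_sigma, hb.span_eq]

lemma finrank_eq_sum [Fintype ι] (hb : IsJordanBasis A W q z) : finrank F W = ∑ k, q k := by
  rw [← hb.span_eq, finrank_span_eq_card hb.linearIndependent, Fintype.card_sigma]
  simp only [Fintype.card_fin]

lemma comp_equiv {κ : Type*} (hb : IsJordanBasis A W q z) (e : κ ≃ ι) :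
    IsJordanBasis A W (q ∘ e) (z ∘ e) := by
  have hchains :
      jordanChains A (q ∘ e) (z ∘ e) = jordanChains A q z ∘ Equiv.sigmaCongrLeft e := rfl
  refine ⟨fun k => hb.pos (e k), fun k => hb.pow_apply_eq_zero (e k), ?_, ?_⟩
  · rw [hchains]
    exact hb.linearIndependent.comp _ (Equiv.injective _)
  · rw [hchains, (Equiv.surjective _).range_comp, hb.span_eq]

lemma linearIndependent_chainEnds (hb : IsJordanBasis A W q z) {n : ι → ℕ}
    (hn : ∀ k, n k ≤ q k) :
    LinearIndependent F fun p : Σ k, Fin (n k) => (A ^ (q p.1 - (p.2 + 1))) (z p.1) :=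
  hb.linearIndependent.comp (Sigma.map id fun k => Fin.rev ∘ Fin.castLE (hn k))
    (Function.injective_id.sigma_map fun _ => Fin.rev_injective.comp (Fin.castLE_injective _))

lemma finrank_ker_pow [FiniteDimensional F V] [Fintype ι] (hb : IsJordanBasis A ⊤ q z)
    (m : ℕ) : finrank F (LinearMap.ker (A ^ m)) = ∑ k, min (q k) m := by
  have hker : ∑ k, min (q k) m ≤ finrank F (LinearMap.ker (A ^ m)) := by
    simpa using (hb.linearIndependent_chainEnds fun k => min_le_left (q k) m)
      |>.card_le_finrank_of_forall_mem fun ⟨k, j⟩ => by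
        rw [LinearMap.mem_ker, ← Module.End.mul_apply, ← pow_add]
        exact A.pow_apply_eq_zero_of_le (hb.pow_apply_eq_zero k) (by grind)
  have hrange : ∑ k, (q k - m) ≤ finrank F (LinearMap.range (A ^ m)) := by
    simpa using (hb.linearIndependent_chainEnds fun k => Nat.sub_le (q k) m)
      |>.card_le_finrank_of_forall_mem fun ⟨k, j⟩ =>
        LinearMap.mem_range.2 ⟨(A ^ (q k - (j + 1) - m)) (z k), by
          rw [← Module.End.mul_apply, ← pow_add, Nat.add_sub_cancel' (by grind)]⟩
  have hdim : finrank F V = ∑ k, q k := by rw [← finrank_top, hb.finrank_eq_sum]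
  have hsplit : ∑ k, min (q k) m + ∑ k, (q k - m) = ∑ k, q k := by
    rw [← Finset.sum_add_distrib]
    exact Finset.sum_congr rfl fun k _ => by omega
  have := LinearMap.finrank_range_add_finrank_ker (A ^ m)
  omega

lemma isJordanType [FiniteDimensional F V] {r : ℕ} {q : Fin r → ℕ} {z : Fin r → V}
    (hb : IsJordanBasis A ⊤ q z) :
    IsJordanType F V A ((List.ofFn q).insertionSort (· ≥ ·)) := by
  have hperm := List.perm_insertionSort (· ≥ ·) (List.ofFn q)
  refine ⟨List.pairwise_insertionSort _ _, fun p hp => ?_, fun m => ?_⟩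
  · obtain ⟨k, rfl⟩ := List.mem_ofFn.1 (hperm.mem_iff.1 hp)
    exact hb.pos k
  · rw [(hperm.map _).sum_eq, List.map_ofFn, List.sum_ofFn, hb.finrank_ker_pow]
    rfl

lemma span_eq_of_map {w z : ι → V} (hW : W.map A ≤ W) (hb : IsJordanBasis A (W.map A) q w)
    (hzW : ∀ k, z k ∈ W) (hz : ∀ k, A (z k) = w k) {s : ℕ} {u : Fin s → V}
    (huW : ∀ i, u i ∈ W)
    (hker : W ⊓ LinearMap.ker A ≤
      span F (Set.range fun k => (A ^ q k) (z k)) ⊔ span F (Set.range u)) :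
    span F (Set.range (jordanChains A (Sum.elim (fun k => q k + 1) fun _ => 1) (Sum.elim z u))) =
      W := by
  set M :=
    span F (Set.range (jordanChains A (Sum.elim (fun k => q k + 1) fun _ => 1) (Sum.elim z u)))
  have hMW : M ≤ W := by
    refine span_le.2 (Set.range_subset_iff.2 fun ⟨k, j⟩ => ?_)
    refine Module.End.pow_apply_mem_of_forall_mem _ (fun x hx => hW (mem_map_of_mem hx)) _ ?_
    rcases k with k | i
    exacts [hzW k, huW i]
  have hmapM : W.map A ≤ M.map A := by
    rw [← hb.span_eq]
    refine span_le.2 (Set.range_subset_iff.2 fun ⟨k, j⟩ => ?_)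
    refine ⟨jordanChains A _ (Sum.elim z u) ⟨Sum.inl k, j.castSucc⟩,
      subset_span ⟨_, rfl⟩, ?_⟩
    show A ((A ^ (j : ℕ)) (z k)) = (A ^ (j : ℕ)) (w k)
    rw [← Module.End.mul_apply, ← pow_succ', pow_succ, Module.End.mul_apply, hz]
  have hkerM : W ⊓ LinearMap.ker A ≤ M := by
    refine hker.trans (sup_le (span_le.2 ?_) (span_le.2 ?_)) <;>
      refine Set.range_subset_iff.2 fun k => subset_span ?_
    · exact ⟨⟨Sum.inl k, Fin.last (q k)⟩, rfl⟩
    · exact ⟨⟨Sum.inr k, ⟨0, Nat.one_pos⟩⟩, by simp [jordanChains]⟩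
  refine hMW.antisymm fun x hx => ?_
  obtain ⟨y, hyM, hyx⟩ := hmapM (mem_map_of_mem hx)
  have hxy : x - y ∈ W ⊓ LinearMap.ker A :=
    ⟨sub_mem hx (hMW hyM), LinearMap.mem_ker.2 (by rw [map_sub, hyx, sub_self])⟩
  simpa using add_mem (hkerM hxy) hyM

lemma of_map [FiniteDimensional F V] [Fintype ι] {w z : ι → V} (hW : W.map A ≤ W)
    (hb : IsJordanBasis A (W.map A) q w) (hzW : ∀ k, z k ∈ W) (hz : ∀ k, A (z k) = w k)
    {s : ℕ} {u : Fin s → V} (hu : LinearIndependent F u)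
    (hdisj : Disjoint (span F (Set.range fun k => (A ^ q k) (z k))) (span F (Set.range u)))
    (hsup : span F (Set.range fun k => (A ^ q k) (z k)) ⊔ span F (Set.range u) =
      W ⊓ LinearMap.ker A) :
    IsJordanBasis A W (Sum.elim (fun k => q k + 1) fun _ => 1) (Sum.elim z u) := by
  have huWK : ∀ i, u i ∈ W ⊓ LinearMap.ker A := fun i =>
    hsup ▸ mem_sup_right (subset_span ⟨i, rfl⟩)
  have hspan := hb.span_eq_of_map hW hzW hz (fun i => (huWK i).1) hsup.ge
  have htops : LinearIndependent F fun k => (A ^ q k) (z k) := by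
    have hends := hb.linearIndependent.comp
      (fun k => (⟨k, ⟨q k - 1, Nat.sub_lt (hb.pos k) one_pos⟩⟩ : Σ k, Fin (q k)))
      fun _ _ h => (Sigma.mk.inj_iff.1 h).1
    convert hends using 2 with k
    show _ = (A ^ (q k - 1)) (w k)
    rw [← hz, ← Module.End.mul_apply, ← pow_succ, Nat.sub_add_cancel (hb.pos k)]
  have hkerdim := finrank_sup_add_finrank_inf_eq (span F (Set.range fun k => (A ^ q k) (z k)))
    (span F (Set.range u))
  rw [hsup, disjoint_iff.1 hdisj, finrank_bot, finrank_span_eq_card htops,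
    finrank_span_eq_card hu, Fintype.card_fin] at hkerdim
  have hcard : finrank F W = ∑ k, (q k + 1) + s := by
    rw [← finrank_map_add_finrank_inf_ker A W, hb.finrank_eq_sum, Finset.sum_add_distrib,
      Finset.sum_const, Finset.card_univ, smul_eq_mul, mul_one]
    omega
  refine ⟨?_, ?_, ?_, hspan⟩
  · rintro (k | i) <;> simp
  · rintro (k | i)
    · simp only [Sum.elim_inl]
      rw [pow_succ, Module.End.mul_apply, hz, hb.pow_apply_eq_zero]
    · simpa using (huWK i).2
  · rw [linearIndependent_iff_card_eq_finrank_span, Set.finrank, hspan, hcard]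
    simp [Fintype.card_sigma, Fintype.sum_sum_type]

lemma exists_of_map [FiniteDimensional F V] [Fintype ι] {w : ι → V} (hW : W.map A ≤ W)
    (hb : IsJordanBasis A (W.map A) q w) :
    ∃ (s : ℕ) (z : ι → V) (u : Fin s → V),
      IsJordanBasis A W (Sum.elim (fun k => q k + 1) fun _ => 1) (Sum.elim z u) := by
  have hw : ∀ k, w k ∈ W.map A := fun k =>
    hb.span_eq ▸ subset_span ⟨⟨k, ⟨0, hb.pos k⟩⟩, by simp [jordanChains]⟩
  choose z hzW hz using hw
  have htops : span F (Set.range fun k => (A ^ q k) (z k)) ≤ W ⊓ LinearMap.ker A := by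
    refine span_le.2 (Set.range_subset_iff.2 fun k => ⟨?_, ?_⟩)
    · exact Module.End.pow_apply_mem_of_forall_mem _ (fun x hx => hW (mem_map_of_mem hx)) _
        (hzW k)
    · show A ((A ^ q k) (z k)) = 0
      rw [← Module.End.mul_apply, ← pow_succ', pow_succ, Module.End.mul_apply, hz,
        hb.pow_apply_eq_zero]
  obtain ⟨C, hdisj, hsup⟩ := IsModularLattice.exists_disjoint_and_sup_eq htops
  let b := finBasis F C
  have hspanC : span F (Set.range (C.subtype ∘ b)) = C := by
    rw [Set.range_comp, ← map_span, b.span_eq, map_subtype_top]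
  refine ⟨_, z, _, hb.of_map hW hzW hz (b.linearIndependent.map' C.subtype C.ker_subtype) ?_ ?_⟩
  · rwa [hspanC]
  · rwa [hspanC]

end IsJordanBasis

theorem exists_isJordanBasis [FiniteDimensional F V] (hA : IsNilpotent A) (W : Submodule F V)
    (hW : W.map A ≤ W) :
    ∃ (ι : Type) (_ : Fintype ι) (q : ι → ℕ) (z : ι → V), IsJordanBasis A W q z := by
  induction W using WellFoundedLT.induction with
  | ind W ih =>
    rcases eq_or_ne W ⊥ with rfl | hne
    · exact ⟨Empty, inferInstance, _, _, isJordanBasis_empty⟩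
    obtain ⟨ι, _, q, w, hb⟩ := ih _ (map_lt_of_isNilpotent hA hW hne) (map_mono hW)
    obtain ⟨s, z, u, hzu⟩ := hb.exists_of_map hW
    exact ⟨ι ⊕ Fin s, inferInstance, _, _, hzu⟩

end Jordan

/-- A nilpotent endomorphism `A` of a finite dimensional vector space admits vectors
`z_1, …, z_r` so that `V` is the internal direct sum of the cyclic submodules
`F[A]·z_k`, and the lengths `dim F[A]·z_k`, arranged in decreasing order, form the
Jordan type of `A`. -/
theorem exists_cyclic_decomposition
    (F V : Type*) [Field F] [AddCommGroup V] [Module F V] [FiniteDimensional F V]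
    (A : Module.End F V) (hA : IsNilpotent A) :
    ∃ (r : ℕ) (z : Fin r → V),
      iSupIndep (fun k : Fin r => cyclicSub F V A (z k)) ∧
      (⨆ k : Fin r, cyclicSub F V A (z k)) = ⊤ ∧
      ∃ Q : List ℕ, IsJordanType F V A Q ∧
        Q.Perm (List.ofFn fun k : Fin r =>
          Module.finrank F ↥(cyclicSub F V A (z k))) := by
  obtain ⟨ι, _, q, z, hb⟩ := exists_isJordanBasis hA ⊤ le_top
  have hb' := hb.comp_equiv (Fintype.equivFin ι).symm
  refine ⟨_, _, hb'.iSupIndep_cyclicSub, hb'.iSup_cyclicSub, _, hb'.isJordanType, ?_⟩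
  simp only [hb'.finrank_cyclicSub]
  exact List.perm_insertionSort _ _
end

section
/- Let D be a finite poset and define c_i as the maximum number of vertices covered by a union of i chains. Then the sequence c_i − c_{i−1} is weakly decreasing in i, i.e., λ(D) is a partition. (Greene's theorem on concavity of the chain-covering numbers.) -/
/-!
Following Greene and Kleitman, split every element `v` of the poset into an arc
`vIn v → vOut v` and add arcs `vOut u → vIn w` for `u < w`, arcs from a source to every `vIn v`
and from every `vOut v` to a sink. A family of `k` chains gives a `0/1`-flow of value at most `k`
through the elements it covers, and conversely such a flow is traced out by at most `k` chains,
so `c_k` is the largest number of unit-capacity vertex arcs saturated by a flow of value `≤ k`.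

Take flows `f`, `g` of values `i + 1` and `i - 1` realising `c_{i+1}` and `c_{i-1}`. The
difference `f - g` has net outflow `2` at the source, so it contains a conformal unit
source–sink flow `d`. Then `f - d` and `g + d` are again `0/1`-flows, both of value `≤ i`, and
together they saturate exactly as many vertex arcs as `f` and `g`, whence
`c_{i+1} + c_{i-1} ≤ 2 c_i`.
-/

/-- `chainCoverNum α i` is `c_i`: the maximal number of vertices of the finite poset
`α` covered by a union of `i` chains. -/
noncomputable def chainCoverNum (α : Type*) [Fintype α] [PartialOrder α]
    [DecidableEq α] (i : ℕ) : ℕ :=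
  sSup {m | ∃ C : Fin i → Finset α,
    (∀ j, IsChain (· ≤ ·) (↑(C j) : Set α)) ∧ (Finset.univ.biUnion C).card = m}

open Finset

namespace Greene

lemma card_filter_eq_one_eq_sum {β : Type*} [Fintype β] (g : β → ℤ) (h0 : ∀ x, 0 ≤ g x)
    (h1 : ∀ x, g x ≤ 1) : (#(univ.filter fun x => g x = 1) : ℤ) = ∑ x, g x := by
  rw [card_filter, Nat.cast_sum]
  refine sum_congr rfl fun x _ => ?_
  have := h0 x
  have := h1 x
  split_ifs <;> omega

section Flow

variable {V : Type*}

def arc [DecidableEq V] (a b : V) : V → V → ℤ := Pi.single a (Pi.single b 1)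

lemma arc_apply [DecidableEq V] (a b x y : V) :
    arc a b x y = if x = a ∧ y = b then 1 else 0 := by
  by_cases hx : x = a <;> by_cases hy : y = b <;> simp [arc, hx, hy]

variable [Fintype V]

def netOut (f : V → V → ℤ) (n : V) : ℤ := ∑ m, f n m - ∑ m, f m n

lemma netOut_add (f g : V → V → ℤ) : netOut (f + g) = netOut f + netOut g := by
  ext n
  simp only [netOut, Pi.add_apply, sum_add_distrib]
  ring

lemma netOut_sub (f g : V → V → ℤ) : netOut (f - g) = netOut f - netOut g := by
  ext n
  simp only [netOut, Pi.sub_apply, sum_sub_distrib]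
  ring

lemma netOut_neg (f : V → V → ℤ) : netOut (-f) = -netOut f := by
  ext n
  simp only [netOut, Pi.neg_apply, sum_neg_distrib]
  ring

def mass (h : V → V → ℤ) : ℕ := ∑ p : V × V, (h p.1 p.2).natAbs

lemma mass_sub_lt {h e : V → V → ℤ} (he : ∀ x y, e x y ∈ Set.uIcc 0 (h x y)) {a b : V}
    (hab : e a b ≠ 0) : mass (h - e) < mass h := by
  refine sum_lt_sum (fun p _ => ?_) ⟨(a, b), mem_univ _, ?_⟩
  · have := he p.1 p.2
    rw [Set.mem_uIcc] at this
    simp only [Pi.sub_apply]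
    omega
  · have := he a b
    rw [Set.mem_uIcc] at this
    simp only [Pi.sub_apply]
    omega

lemma exists_arc_of_netOut_pos {h : V → V → ℤ} {s : V} (hs : 0 < netOut h s) :
    ∃ b ≠ s, 0 < h s b ∨ h b s < 0 := by
  by_contra! hcon
  have : netOut h s ≤ 0 := by
    rw [netOut, ← sum_sub_distrib]
    refine sum_nonpos fun b _ => ?_
    rcases eq_or_ne b s with rfl | hb
    · simp
    · linarith [hcon b hb]
  omega

variable [DecidableEq V]

lemma netOut_arc (a b : V) : netOut (arc a b) = Pi.single a 1 - Pi.single b 1 := by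
  ext n
  simp only [netOut, arc, Pi.sub_apply]
  rw [← Finset.sum_apply n, Finset.sum_pi_single']
  by_cases h : n = a <;> simp [Pi.single_apply, h]

lemma exists_conformal_arc {h : V → V → ℤ} {s : V} (hs : 0 < netOut h s) :
    ∃ b ≠ s, ∃ e : V → V → ℤ, (∀ x y, e x y ∈ Set.uIcc 0 (h x y)) ∧
      netOut e = Pi.single s 1 - Pi.single b 1 ∧ mass (h - e) < mass h := by
  obtain ⟨b, hbs, hpos | hneg⟩ := exists_arc_of_netOut_pos hs
  · have he : ∀ x y, arc s b x y ∈ Set.uIcc 0 (h x y) := by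
      intro x y
      rw [arc_apply, Set.mem_uIcc]
      split_ifs with hxy
      · obtain ⟨rfl, rfl⟩ := hxy
        omega
      · omega
    exact ⟨b, hbs, arc s b, he, netOut_arc s b,
      mass_sub_lt he (a := s) (b := b) (by simp [arc_apply])⟩
  · have he : ∀ x y, (-arc b s) x y ∈ Set.uIcc 0 (h x y) := by
      intro x y
      rw [Pi.neg_apply, Pi.neg_apply, arc_apply, Set.mem_uIcc]
      split_ifs with hxy
      · obtain ⟨rfl, rfl⟩ := hxy
        omega
      · omega
    refine ⟨b, hbs, -arc b s, he, by rw [netOut_neg, netOut_arc]; abel,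
      mass_sub_lt he (a := b) (b := s) (by simp [arc_apply])⟩

/-- Walk from `s` along arcs of `h` (forwards where `h > 0`, backwards where `h < 0`), peeling
off one unit at a time: since `h` has nonnegative net outflow away from `t`, the walk can only
stop at `t`. -/
theorem exists_conformal_unitFlow (h : V → V → ℤ) {s t : V}
    (hnn : ∀ n ≠ t, 0 ≤ netOut h n) (hs : 0 < netOut h s) :
    ∃ d : V → V → ℤ, (∀ x y, d x y ∈ Set.uIcc 0 (h x y)) ∧
      netOut d = Pi.single s 1 - Pi.single t 1 := by
  induction hm : mass h using Nat.strong_induction_on generalizing h s with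
  | _ m ih =>
  obtain ⟨b, hbs, e, he, hne, hmass⟩ := exists_conformal_arc hs
  by_cases hbt : b = t
  · exact ⟨e, he, hbt ▸ hne⟩
  have hnet : ∀ n, netOut (h - e) n =
      netOut h n - (if n = s then 1 else 0) + (if n = b then 1 else 0) := by
    intro n
    simp only [netOut_sub, hne, Pi.sub_apply, Pi.single_apply]
    ring
  obtain ⟨d, hd, hdn⟩ := ih _ (hm ▸ hmass) (h - e)
    (fun n hn => by
      have := hnn n hn
      rw [hnet]
      split_ifs <;> subst_vars <;> omega)
    (by rw [hnet, if_neg hbs, if_pos rfl]; linarith [hnn b hbt]) rfl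
  refine ⟨d + e, fun x y => ?_, by rw [netOut_add, hdn, hne]; abel⟩
  have h1 := he x y
  have h2 := hd x y
  simp only [Pi.sub_apply, Pi.add_apply, Set.mem_uIcc] at h1 h2 ⊢
  omega

end Flow

section Network

variable {α : Type*}

/-- The nodes of the chain network: a source, a sink, and two copies `vIn v`, `vOut v` of each
element, joined by the arc `vIn v → vOut v`, whose unit capacity lets a flow use `v` once. -/
abbrev Node (α : Type*) := Bool ⊕ (α ⊕ α)

def source : Node α := .inl false
def sink : Node α := .inl true
def vIn (v : α) : Node α := .inr (.inl v)
def vOut (v : α) : Node α := .inr (.inr v)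

lemma source_ne_sink : (source : Node α) ≠ sink := by simp [source, sink]

def value [Fintype α] (f : Node α → Node α → ℤ) : ℤ := netOut f source

def cover [Fintype α] (f : Node α → Node α → ℤ) : Finset α :=
  univ.filter fun v => f (vIn v) (vOut v) = 1

lemma mem_cover [Fintype α] {f : Node α → Node α → ℤ} {v : α} :
    v ∈ cover f ↔ f (vIn v) (vOut v) = 1 := by
  simp [cover]

section Arc

variable [LT α]

def Arc : Node α → Node α → Prop
  | .inl false, .inr (.inl _) => True
  | .inr (.inl v), .inr (.inr w) => v = w
  | .inr (.inr v), .inr (.inl w) => v < w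
  | .inr (.inr _), .inl true => True
  | _, _ => False

lemma Arc.eq_vOut {v : α} {m : Node α} (h : Arc (vIn v) m) : m = vOut v := by
  rcases m with (_ | _) | w | w <;> simp_all [Arc, vIn, vOut]

lemma Arc.eq_vIn {v : α} {m : Node α} (h : Arc m (vOut v)) : m = vIn v := by
  rcases m with (_ | _) | w | w <;> simp_all [Arc, vIn, vOut]

lemma Arc.eq_source_or_vOut {v : α} {m : Node α} (h : Arc m (vIn v)) :
    m = source ∨ ∃ u < v, m = vOut u := by
  rcases m with (_ | _) | w | w <;> simp_all [Arc, vIn, vOut, source]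

lemma not_arc_source (m : Node α) : ¬ Arc m source := by
  rcases m with (_ | _) | w | w <;> simp [Arc, source]

variable [Fintype α]

structure IsChainFlow (f : Node α → Node α → ℤ) : Prop where
  nonneg : ∀ a b, 0 ≤ f a b
  le_one : ∀ a b, f a b ≤ 1
  arc_of_ne_zero : ∀ a b, f a b ≠ 0 → Arc a b
  netOut_eq_zero : ∀ n, n ≠ source → n ≠ sink → netOut f n = 0

variable {f : Node α → Node α → ℤ}

lemma sum_into_vIn (harc : ∀ a b, f a b ≠ 0 → Arc a b)
    (hcons : ∀ n, n ≠ source → n ≠ sink → netOut f n = 0) (v : α) :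
    ∑ m, f m (vIn v) = f (vIn v) (vOut v) := by
  have hout : ∑ m, f (vIn v) m = f (vIn v) (vOut v) :=
    sum_eq_single _ (fun m _ hm => not_not.1 fun h => hm (harc _ _ h).eq_vOut) (by simp)
  have := hcons (vIn v) (by simp [vIn, source]) (by simp [vIn, sink])
  rw [netOut, hout] at this
  linarith

lemma sum_out_of_vOut (harc : ∀ a b, f a b ≠ 0 → Arc a b)
    (hcons : ∀ n, n ≠ source → n ≠ sink → netOut f n = 0) (u : α) :
    ∑ m, f (vOut u) m = f (vIn u) (vOut u) := by
  have hin : ∑ m, f m (vOut u) = f (vIn u) (vOut u) :=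
    sum_eq_single _ (fun m _ hm => not_not.1 fun h => hm (harc _ _ h).eq_vIn) (by simp)
  have := hcons (vOut u) (by simp [vOut, source]) (by simp [vOut, sink])
  rw [netOut, hin] at this
  linarith

/-- Every arc into `vIn v` or out of `vOut v` carries at most the flow through `v`. -/
lemma isChainFlow_of_diag_le_one (hnonneg : ∀ a b, 0 ≤ f a b)
    (harc : ∀ a b, f a b ≠ 0 → Arc a b)
    (hcons : ∀ n, n ≠ source → n ≠ sink → netOut f n = 0)
    (hdiag : ∀ v, f (vIn v) (vOut v) ≤ 1) : IsChainFlow f := by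
  refine ⟨hnonneg, fun a b => ?_, harc, hcons⟩
  by_cases hab : f a b = 0
  · omega
  have hle_in : ∀ v, f a (vIn v) ≤ 1 := fun v =>
    (single_le_sum (fun m _ => hnonneg m (vIn v)) (mem_univ a)).trans
      ((sum_into_vIn harc hcons v).trans_le (hdiag v))
  have hle_out : ∀ u, f (vOut u) b ≤ 1 := fun u =>
    (single_le_sum (fun m _ => hnonneg (vOut u) m) (mem_univ b)).trans
      ((sum_out_of_vOut harc hcons u).trans_le (hdiag u))
  rcases a with (_ | _) | u | u <;> rcases b with (_ | _) | w | w <;>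
    first
    | exact hle_in w
    | exact hle_out u
    | (obtain rfl : u = w := harc _ _ hab; exact hdiag u)
    | exact absurd (harc _ _ hab) (by simp [Arc])

lemma IsChainFlow.card_cover (hf : IsChainFlow f) :
    (#(cover f) : ℤ) = ∑ v, f (vIn v) (vOut v) :=
  card_filter_eq_one_eq_sum _ (fun _ => hf.nonneg _ _) (fun _ => hf.le_one _ _)

lemma IsChainFlow.of_mem_uIcc {g f' : Node α → Node α → ℤ} (hf : IsChainFlow f)
    (hg : IsChainFlow g) (hf' : ∀ a b, f' a b ∈ Set.uIcc (f a b) (g a b))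
    (hcons : ∀ n, n ≠ source → n ≠ sink → netOut f' n = 0) : IsChainFlow f' := by
  refine ⟨fun a b => ?_, fun a b => ?_, fun a b hab => ?_, hcons⟩ <;>
    have h := hf' a b <;> rw [Set.mem_uIcc] at h
  · have := hf.nonneg a b
    have := hg.nonneg a b
    omega
  · have := hf.le_one a b
    have := hg.le_one a b
    omega
  · by_cases hfab : f a b = 0
    · exact hg.arc_of_ne_zero a b fun hgab => hab (by omega)
    · exact hf.arc_of_ne_zero a b hfab

theorem IsChainFlow.exists_rebalance [DecidableEq α] {g : Node α → Node α → ℤ}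
    (hf : IsChainFlow f) (hg : IsChainFlow g) {k : ℤ} (hfk : value f ≤ k + 1)
    (hgk : value g + 1 ≤ k) :
    ∃ f' g', IsChainFlow f' ∧ IsChainFlow g' ∧ value f' ≤ k ∧ value g' ≤ k ∧
      f' + g' = f + g := by
  by_cases hf_le : value f ≤ k
  · exact ⟨f, g, hf, hg, hf_le, by omega, rfl⟩
  have hsrc : netOut (f - g) source = value f - value g := by rw [netOut_sub]; rfl
  obtain ⟨d, hd, hdn⟩ := exists_conformal_unitFlow (f - g)
    (fun n hn => by
      by_cases hns : n = source
      · rw [hns, hsrc]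
        omega
      · rw [netOut_sub, Pi.sub_apply, hf.netOut_eq_zero n hns hn, hg.netOut_eq_zero n hns hn,
          sub_zero])
    (by rw [hsrc]; omega)
  have hd_inner : ∀ n, n ≠ source → n ≠ sink → netOut d n = 0 := fun n hs ht => by
    simp [hdn, hs, ht]
  have hd_source : netOut d source = 1 := by
    simp [hdn, source_ne_sink]
  refine ⟨f - d, g + d, hf.of_mem_uIcc hg (fun a b => ?_) (fun n hs ht => ?_),
    hf.of_mem_uIcc hg (fun a b => ?_) (fun n hs ht => ?_), ?_, ?_, by abel⟩
  · have := hd a b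
    simp only [Pi.sub_apply, Set.mem_uIcc] at this ⊢
    omega
  · rw [netOut_sub, Pi.sub_apply, hf.netOut_eq_zero n hs ht, hd_inner n hs ht, sub_zero]
  · have := hd a b
    simp only [Pi.sub_apply, Pi.add_apply, Set.mem_uIcc] at this ⊢
    omega
  · rw [netOut_add, Pi.add_apply, hg.netOut_eq_zero n hs ht, hd_inner n hs ht, add_zero]
  · change netOut (f - d) source ≤ k
    rw [netOut_sub, Pi.sub_apply, hd_source]
    change value f - 1 ≤ k
    omega
  · change netOut (g + d) source ≤ k
    rw [netOut_add, Pi.add_apply, hd_source]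
    change value g + 1 ≤ k
    omega

lemma IsChainFlow.card_sources_le_value (hf : IsChainFlow f) :
    (#(univ.filter fun v => f source (vIn v) = 1) : ℤ) ≤ value f := by
  have hin : ∑ m, f m source = 0 :=
    sum_eq_zero fun m _ => not_not.1 fun h => not_arc_source m (hf.arc_of_ne_zero m source h)
  have hout : ∑ v, f source (vIn v) ≤ ∑ m, f source m := by
    rw [Fintype.sum_sum_type, Fintype.sum_sum_type]
    have h1 := sum_nonneg fun b (_ : b ∈ univ) => hf.nonneg source (.inl b)
    have h2 := sum_nonneg fun v (_ : v ∈ univ) => hf.nonneg source (vOut v)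
    change _ ≤ _ + (∑ v, f source (vIn v) + ∑ v, f source (vOut v))
    linarith
  rw [card_filter_eq_one_eq_sum _ (fun _ => hf.nonneg _ _) (fun _ => hf.le_one _ _), value,
    netOut, hin, sub_zero]
  exact hout

lemma IsChainFlow.mem_cover_cases (hf : IsChainFlow f) {v : α} (hv : v ∈ cover f) :
    f source (vIn v) = 1 ∨ ∃ u < v, u ∈ cover f ∧ f (vOut u) (vIn v) = 1 := by
  have hin : ∑ m, f m (vIn v) = 1 :=
    (sum_into_vIn hf.arc_of_ne_zero hf.netOut_eq_zero v).trans (mem_cover.1 hv)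
  obtain ⟨m, -, hm⟩ := exists_ne_zero_of_sum_ne_zero (hin.trans_ne one_ne_zero)
  have hm1 : f m (vIn v) = 1 := by
    have := hf.nonneg m (vIn v)
    have := hf.le_one m (vIn v)
    omega
  rcases (hf.arc_of_ne_zero _ _ hm).eq_source_or_vOut with rfl | ⟨u, huv, rfl⟩
  · exact Or.inl hm1
  refine Or.inr ⟨u, huv, mem_cover.2 ?_, hm1⟩
  have := (single_le_sum (fun m _ => hf.nonneg (vOut u) m) (mem_univ (vIn v))).trans_eq
    (sum_out_of_vOut hf.arc_of_ne_zero hf.netOut_eq_zero u)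
  have := hf.le_one (vIn u) (vOut u)
  omega

lemma IsChainFlow.eq_of_out_eq_one (hf : IsChainFlow f) {u w w' : α}
    (hw : f (vOut u) (vIn w) = 1) (hw' : f (vOut u) (vIn w') = 1) : w = w' := by
  classical
  by_contra hne
  have hsum : f (vOut u) (vIn w) + f (vOut u) (vIn w') ≤ ∑ m, f (vOut u) m := by
    rw [← sum_pair (show vIn w ≠ vIn w' by simpa [vIn] using hne)]
    exact sum_le_sum_of_subset_of_nonneg (subset_univ _) fun m _ _ => hf.nonneg _ m
  rw [sum_out_of_vOut hf.arc_of_ne_zero hf.netOut_eq_zero] at hsum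
  have := hf.le_one (vIn u) (vOut u)
  omega

end Arc

section Path

variable [DecidableEq α]

def pathFrom (u : α) : List α → Node α → Node α → ℤ
  | [] => arc (vIn u) (vOut u) + arc (vOut u) sink
  | w :: l => arc (vIn u) (vOut u) + arc (vOut u) (vIn w) + pathFrom w l

def pathFlow : List α → Node α → Node α → ℤ
  | [] => 0
  | v :: l => arc source (vIn v) + pathFrom v l

lemma pathFrom_nonneg (u : α) (l : List α) (a b : Node α) : 0 ≤ pathFrom u l a b := by
  induction l generalizing u with
  | nil =>
    simp only [pathFrom, Pi.add_apply, arc_apply]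
    split_ifs <;> omega
  | cons w l ih =>
    simp only [pathFrom, Pi.add_apply, arc_apply]
    have := ih w
    split_ifs <;> omega

lemma pathFlow_nonneg (l : List α) (a b : Node α) : 0 ≤ pathFlow l a b := by
  cases l with
  | nil => simp [pathFlow]
  | cons v l =>
    simp only [pathFlow, Pi.add_apply, arc_apply]
    have := pathFrom_nonneg v l a b
    split_ifs <;> omega

lemma arc_apply_vIn_vOut (a b : Node α) (v : α) :
    arc a b (vIn v) (vOut v) = if a = vIn v ∧ b = vOut v then 1 else 0 := by
  rw [arc_apply]
  simp only [eq_comm]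

lemma pathFrom_diag (u : α) (l : List α) (v : α) :
    pathFrom u l (vIn v) (vOut v) = (u :: l).count v := by
  induction l generalizing u with
  | nil =>
    simp only [pathFrom, Pi.add_apply, arc_apply_vIn_vOut]
    simp [vIn, vOut, sink, List.count_singleton]
  | cons w l ih =>
    simp only [List.count_cons (l := w :: l), pathFrom, Pi.add_apply, ih, arc_apply_vIn_vOut]
    simp [vIn, vOut, add_comm]

lemma pathFlow_diag (l : List α) (v : α) : pathFlow l (vIn v) (vOut v) = l.count v := by
  cases l with
  | nil => simp [pathFlow]
  | cons w l =>
    simp only [pathFlow, Pi.add_apply, pathFrom_diag, arc_apply_vIn_vOut]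
    simp [source, vIn]

lemma arc_apply_eq_zero [LT α] {a b x y : Node α} (hab : Arc a b) (hxy : ¬ Arc x y) :
    arc a b x y = 0 := by
  rw [arc_apply, if_neg]
  rintro ⟨rfl, rfl⟩
  exact hxy hab

lemma pathFrom_eq_zero [LT α] {u : α} {l : List α} (hl : (u :: l).Pairwise (· < ·))
    {a b : Node α} (hab : ¬ Arc a b) : pathFrom u l a b = 0 := by
  induction l generalizing u with
  | nil =>
    simp [pathFrom, arc_apply_eq_zero (show Arc (vIn u) (vOut u) from rfl) hab,
      arc_apply_eq_zero (show Arc (vOut u) sink from trivial) hab]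
  | cons w l ih =>
    rw [List.pairwise_cons] at hl
    simp [pathFrom, arc_apply_eq_zero (show Arc (vIn u) (vOut u) from rfl) hab,
      arc_apply_eq_zero (show Arc (vOut u) (vIn w) from hl.1 w (by simp)) hab, ih hl.2]

lemma pathFlow_eq_zero [LT α] {l : List α} (hl : l.Pairwise (· < ·)) {a b : Node α}
    (hab : ¬ Arc a b) : pathFlow l a b = 0 := by
  cases l with
  | nil => rfl
  | cons v l =>
    simp [pathFlow, arc_apply_eq_zero (show Arc source (vIn v) from trivial) hab,
      pathFrom_eq_zero hl hab]

variable [Fintype α]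

lemma netOut_pathFrom (u : α) (l : List α) :
    netOut (pathFrom u l) = Pi.single (vIn u) 1 - Pi.single sink 1 := by
  induction l generalizing u with
  | nil =>
    rw [pathFrom, netOut_add, netOut_arc, netOut_arc]
    abel
  | cons w l ih =>
    rw [pathFrom, netOut_add, netOut_add, netOut_arc, netOut_arc, ih]
    abel

lemma netOut_pathFlow_eq_zero (l : List α) {n : Node α} (hs : n ≠ source) (ht : n ≠ sink) :
    netOut (pathFlow l) n = 0 := by
  cases l with
  | nil => simp [pathFlow, netOut]
  | cons v l =>
    simp [pathFlow, netOut_add, netOut_arc, netOut_pathFrom, Pi.single_apply, hs, ht]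

lemma value_pathFlow_le_one (l : List α) : value (pathFlow l) ≤ 1 := by
  cases l with
  | nil => simp [value, pathFlow, netOut]
  | cons v l =>
    simp [value, pathFlow, netOut_add, netOut_arc, netOut_pathFrom, vIn, source, sink]

lemma IsChainFlow.add_pathFlow [Preorder α] {f : Node α → Node α → ℤ} (hf : IsChainFlow f)
    {l : List α} (hl : l.Pairwise (· < ·)) (hdisj : ∀ v ∈ l, v ∉ cover f) :
    IsChainFlow (f + pathFlow l) ∧ cover (f + pathFlow l) = cover f ∪ l.toFinset := by
  have hdiag : ∀ v, (f + pathFlow l) (vIn v) (vOut v) =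
      if v ∈ cover f ∪ l.toFinset then 1 else 0 := by
    intro v
    have hfv : f (vIn v) (vOut v) = if v ∈ cover f then 1 else 0 := by
      have := hf.nonneg (vIn v) (vOut v)
      have := hf.le_one (vIn v) (vOut v)
      simp only [mem_cover]
      split_ifs <;> omega
    rw [Pi.add_apply, Pi.add_apply, pathFlow_diag, hfv]
    simp only [mem_union, List.mem_toFinset]
    by_cases hv : v ∈ l
    · rw [List.count_eq_one_of_mem (hl.imp ne_of_lt) hv, if_neg (hdisj v hv),
        if_pos (Or.inr hv)]
      rfl
    · rw [List.count_eq_zero.2 hv]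
      simp [hv]
  refine ⟨isChainFlow_of_diag_le_one ?_ ?_ ?_ ?_, ?_⟩
  · exact fun a b => add_nonneg (hf.nonneg a b) (pathFlow_nonneg l a b)
  · intro a b hab
    by_contra hnot
    simp [not_not.1 ((hf.arc_of_ne_zero a b).mt hnot), pathFlow_eq_zero hl hnot] at hab
  · intro n hs ht
    rw [netOut_add, Pi.add_apply, hf.netOut_eq_zero n hs ht, netOut_pathFlow_eq_zero l hs ht,
      add_zero]
  · intro v
    rw [hdiag]
    split_ifs <;> omega
  · ext v
    rw [mem_cover, hdiag]
    split_ifs with h <;> simpa using h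

end Path

lemma exists_list_pairwise_lt_of_isChain [PartialOrder α] [DecidableEq α] (P : Finset α)
    (hP : IsChain (· ≤ ·) (P : Set α)) :
    ∃ l : List α, l.Pairwise (· < ·) ∧ ∀ v, v ∈ l ↔ v ∈ P := by
  induction P using Finset.strongInduction with
  | H P ih =>
  rcases P.eq_empty_or_nonempty with rfl | hne
  · exact ⟨[], List.Pairwise.nil, by simp⟩
  obtain ⟨m, hm⟩ := P.exists_maximal hne
  obtain ⟨l, hl, hmem⟩ := ih (P.erase m) (erase_ssubset hm.prop)
    (hP.mono (coe_subset.2 (erase_subset m P)))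
  have hlt : ∀ x ∈ l, x < m := fun x hx => by
    obtain ⟨hxm, hxP⟩ := mem_erase.1 ((hmem x).1 hx)
    exact ((hP.total hxP hm.prop).resolve_right fun h => hxm (hm.eq_of_ge hxP h)).lt_of_ne hxm
  refine ⟨l ++ [m], List.pairwise_append.2 ⟨hl, by simp, by simpa using hlt⟩, fun v => ?_⟩
  by_cases hv : v = m
  · simp [hv, hm.prop]
  · simp [hmem, hv]

variable [Fintype α] [PartialOrder α] [DecidableEq α]

/-- Each chain, minus the elements already covered, is added to the flow as one path. -/
lemma exists_isChainFlow_cover_eq {ι : Type*} [DecidableEq ι] (J : Finset ι)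
    (C : ι → Finset α) (hC : ∀ j ∈ J, IsChain (· ≤ ·) (C j : Set α)) :
    ∃ f, IsChainFlow f ∧ value f ≤ #J ∧ cover f = J.biUnion C := by
  induction J using Finset.induction_on with
  | empty =>
    exact ⟨0, ⟨by simp, by simp, by simp, by simp [netOut]⟩, by simp [value, netOut],
      by simp [cover]⟩
  | insert j J hj ih =>
  obtain ⟨f, hf, hfv, hfc⟩ := ih fun j' hj' => hC j' (mem_insert_of_mem hj')
  obtain ⟨l, hl, hlmem⟩ := exists_list_pairwise_lt_of_isChain (C j \ J.biUnion C)
    ((hC j (mem_insert_self j J)).mono (coe_subset.2 sdiff_subset))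
  obtain ⟨hf', hcover⟩ := hf.add_pathFlow hl fun v hv => by
    rw [hfc]
    exact (mem_sdiff.1 ((hlmem v).1 hv)).2
  refine ⟨f + pathFlow l, hf', ?_, ?_⟩
  · have hvalue : value (f + pathFlow l) = value f + value (pathFlow l) := by
      simp only [value, netOut_add, Pi.add_apply]
    have := value_pathFlow_le_one l
    rw [hvalue, card_insert_of_notMem hj]
    push_cast
    omega
  · ext v
    simp only [hcover, hfc, biUnion_insert, mem_union, List.mem_toFinset, hlmem, mem_sdiff]
    tauto

lemma bddAbove_chainCoverNum (i : ℕ) :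
    BddAbove {m | ∃ C : Fin i → Finset α,
      (∀ j, IsChain (· ≤ ·) (↑(C j) : Set α)) ∧ (univ.biUnion C).card = m} :=
  ⟨Fintype.card α, by rintro m ⟨C, -, rfl⟩; exact card_le_univ _⟩

lemma exists_chains_card_eq_chainCoverNum (i : ℕ) :
    ∃ C : Fin i → Finset α, (∀ j, IsChain (· ≤ ·) (↑(C j) : Set α)) ∧
      #(univ.biUnion C) = chainCoverNum α i := by
  refine Nat.sSup_mem ?_ (bddAbove_chainCoverNum i)
  exact ⟨_, fun _ => ∅, fun _ => by simp, rfl⟩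

lemma card_biUnion_le_chainCoverNum {ι : Type*} (R : Finset ι) (T : ι → Finset α)
    (hT : ∀ r ∈ R, IsChain (· ≤ ·) (T r : Set α)) {k : ℕ} (hR : #R ≤ k) :
    #(R.biUnion T) ≤ chainCoverNum α k := by
  let e := R.equivFin
  let C : Fin k → Finset α := fun j => if h : (j : ℕ) < #R then T (e.symm ⟨j, h⟩) else ∅
  have hC : ∀ j, IsChain (· ≤ ·) (C j : Set α) := fun j => by
    unfold C
    split_ifs
    · exact hT _ (e.symm _).2
    · simp
  have hsub : R.biUnion T ⊆ univ.biUnion C := fun v hv => by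
    obtain ⟨r, hr, hvr⟩ := mem_biUnion.1 hv
    refine mem_biUnion.2 ⟨Fin.castLE hR (e ⟨r, hr⟩), mem_univ _, ?_⟩
    simp [C, hvr]
  exact (card_le_card hsub).trans (le_csSup (bddAbove_chainCoverNum k) ⟨C, hC, rfl⟩)

lemma card_le_chainCoverNum_of_iterate (next : α → α) (hnext : ∀ u, u ≤ next u)
    (R S : Finset α) (hS : ∀ v ∈ S, ∃ r ∈ R, ∃ n, next^[n] r = v) {k : ℕ} (hR : #R ≤ k) :
    #S ≤ chainCoverNum α k := by
  classical
  let T : α → Finset α := fun r => univ.filter fun v => ∃ n, next^[n] r = v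
  have hT : ∀ r ∈ R, IsChain (· ≤ ·) (T r : Set α) := by
    intro r _ x hx y hy _
    obtain ⟨n, rfl⟩ := (mem_filter.1 hx).2
    obtain ⟨m, rfl⟩ := (mem_filter.1 hy).2
    rcases le_total n m with h | h
    · exact Or.inl (Function.monotone_iterate_of_id_le hnext h r)
    · exact Or.inr (Function.monotone_iterate_of_id_le hnext h r)
  refine le_trans (card_le_card fun v hv => ?_) (card_biUnion_le_chainCoverNum R T hT hR)
  obtain ⟨r, hr, n, rfl⟩ := hS v hv
  exact mem_biUnion.2 ⟨r, hr, by simp [T]⟩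

/-- The unit leaving each `vOut u` is unique, so following it traces chains, one from each
element fed directly by the source. -/
lemma IsChainFlow.card_cover_le_chainCoverNum {f : Node α → Node α → ℤ} (hf : IsChainFlow f)
    {k : ℕ} (hk : value f ≤ k) : #(cover f) ≤ chainCoverNum α k := by
  have hR : #(univ.filter fun v => f source (vIn v) = 1) ≤ k := by
    have := hf.card_sources_le_value
    omega
  classical
  let next : α → α := fun u => if h : ∃ w, f (vOut u) (vIn w) = 1 then h.choose else u
  have hnext_eq : ∀ u v, f (vOut u) (vIn v) = 1 → next u = v := fun u v h => by
    simp only [next, dif_pos (⟨v, h⟩ : ∃ w, f (vOut u) (vIn w) = 1)]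
    exact hf.eq_of_out_eq_one (⟨v, h⟩ : ∃ w, f (vOut u) (vIn w) = 1).choose_spec h
  have hnext_le : ∀ u, u ≤ next u := fun u => by
    by_cases h : ∃ w, f (vOut u) (vIn w) = 1
    · obtain ⟨w, hw⟩ := h
      rw [hnext_eq u w hw]
      have : Arc (vOut u) (vIn w) := hf.arc_of_ne_zero _ _ (by rw [hw]; exact one_ne_zero)
      exact le_of_lt this
    · simp only [next, dif_neg h, le_refl]
  refine card_le_chainCoverNum_of_iterate next hnext_le
    (univ.filter fun v => f source (vIn v) = 1) (cover f) (fun v hv => ?_) hR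
  induction v using WellFoundedLT.induction with
  | _ v ih =>
  rcases hf.mem_cover_cases hv with h | ⟨u, huv, hu, h⟩
  · exact ⟨v, mem_filter.2 ⟨mem_univ _, h⟩, 0, rfl⟩
  · obtain ⟨r, hr, n, rfl⟩ := ih u huv hu
    exact ⟨r, hr, n + 1, by rw [Function.iterate_succ_apply', hnext_eq _ _ h]⟩

end Network

end Greene

open Greene

/-- Greene's concavity theorem: the chain-covering numbers `c_i` of a finite poset
satisfy `c_{i+1} - c_i ≤ c_i - c_{i-1}` for `i ≥ 1`, i.e.
`c_{i+1} + c_{i-1} ≤ 2 c_i`, so that `λ(D)` is a partition. -/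
theorem chainCoverNum_concave (α : Type*) [Fintype α] [PartialOrder α]
    [DecidableEq α] :
    ∀ i : ℕ, 1 ≤ i →
      chainCoverNum α (i + 1) + chainCoverNum α (i - 1) ≤
        2 * chainCoverNum α i := by
  intro i hi
  obtain ⟨C, hC, hCcard⟩ := exists_chains_card_eq_chainCoverNum (α := α) (i + 1)
  obtain ⟨D, hD, hDcard⟩ := exists_chains_card_eq_chainCoverNum (α := α) (i - 1)
  obtain ⟨f, hf, hfv, hfc⟩ := exists_isChainFlow_cover_eq univ C fun j _ => hC j
  obtain ⟨g, hg, hgv, hgc⟩ := exists_isChainFlow_cover_eq univ D fun j _ => hD j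
  obtain ⟨f', g', hf', hg', hf'v, hg'v, hsum⟩ := hf.exists_rebalance hg (k := i)
    (by simpa using hfv) (by simp at hgv; omega)
  have hcover : #(cover f') + #(cover g') = #(cover f) + #(cover g) := by
    zify
    rw [hf'.card_cover, hg'.card_cover, hf.card_cover, hg.card_cover, ← sum_add_distrib,
      ← sum_add_distrib]
    exact sum_congr rfl fun v _ => congrFun (congrFun hsum _) _
  have := hf'.card_cover_le_chainCoverNum hf'v
  have := hg'.card_cover_le_chainCoverNum hg'v
  rw [hfc, hCcard, hgc, hDcard] at hcover
  omega
end
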